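/- (One-step contraction of the BBK core map.) Assume γ ≥ √(12M) and 0 < h < 1/(4γ). Define Ψ : ℝⁿ × ℝⁿ → ℝⁿ × ℝⁿ by Ψ(x, v) = ( x + h v, ((1 − γh/2)/(1 + γh/2)) v − (h/(1 + γh/2)) ∇U(x + h v) ). Then with a = 1/M and b = (1 + γh/2)/γ, for all (x,v), (x̃,ṽ) ∈ ℝⁿ × ℝⁿ, ‖Ψ(x̃,ṽ) − Ψ(x,v)‖²_{a,b} ≤ (1 − mh/(4γ)) · ‖(x̃ − x, ṽ − v)‖²_{a,b}. -/

import Mathlib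

open scoped RealInnerProductSpace

/-- The squared modified Euclidean norm `‖(x,v)‖²_{a,b} = ‖x‖² + 2b⟨x,v⟩ + a‖v‖²`. -/
noncomputable def modNormSq {n : ℕ} (a b : ℝ)
    (z : EuclideanSpace ℝ (Fin n) × EuclideanSpace ℝ (Fin n)) : ℝ :=
  ‖z.1‖ ^ 2 + 2 * b * ⟪z.1, z.2⟫ + a * ‖z.2‖ ^ 2

/-!
Let `Z` be the difference of the two drifted positions `x + h v`, `W = ṽ - v`, and `g` the
difference of the gradients at the drifted positions. Both sides are quadratic forms in `(Z, W, g)`,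
and their gap is computed exactly. Integrating the Hessian bounds along a segment gives
`m ‖Z‖² ≤ ⟪g, Z⟫`, and the descent lemma together with first-order convexity gives the
cocoercivity `‖g‖² ≤ M ⟪g, Z⟫`. The only indefinite part of the gap is a cross term `⟪u, W⟫`;
Young's inequality with weight `hγ/M` moves it onto `‖W‖²`, whose coefficient is large enough
because `γ² ≥ 12 M`, and onto `‖Z‖²` and `‖g‖²`, which `γh < 1/4` lets the term `2 (h/γ) ⟪g, Z⟫`
absorb.
-/

open Set

lemma sub_sub_deriv_le_of_deriv_sub_le {f f' : ℝ → ℝ} {K : ℝ} (hf : ∀ t, HasDerivAt f (f' t) t)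
    (hK : ∀ t ∈ Ioo (0 : ℝ) 1, f' t - f' 0 ≤ K * t) : f 1 - f 0 - f' 0 ≤ K / 2 := by
  have hg (t : ℝ) : HasDerivAt (fun τ => K / 2 * τ ^ 2 + f' 0 * τ - f τ) (K * t + f' 0 - f' t) t :=
    ((((hasDerivAt_pow 2 t).const_mul (K / 2)).add ((hasDerivAt_id' t).const_mul (f' 0))).sub
      (hf t)).congr_deriv (by ring)
  have hmono : MonotoneOn (fun τ => K / 2 * τ ^ 2 + f' 0 * τ - f τ) (Icc 0 1) := by
    refine monotoneOn_of_hasDerivWithinAt_nonneg (convex_Icc 0 1)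
      (fun t _ => (hg t).continuousAt.continuousWithinAt) (fun t _ => (hg t).hasDerivWithinAt)
      fun t ht => ?_
    rw [interior_Icc] at ht
    linarith [hK t ht]
  have := hmono (left_mem_Icc.2 zero_le_one) (right_mem_Icc.2 zero_le_one) zero_le_one
  simp only at this
  linarith

section Gradient

variable {E : Type*} [NormedAddCommGroup E] [InnerProductSpace ℝ E]

lemma hasDerivAt_add_smul (y d : E) (t : ℝ) : HasDerivAt (fun τ : ℝ => y + τ • d) d t :=
  (((hasDerivAt_id t).smul_const d).const_add y).congr_deriv (one_smul ℝ d)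

lemma two_mul_inner_le_mul_norm_sq_add_inv_mul_norm_sq {lam : ℝ} (hlam : 0 < lam) (u w : E) :
    2 * ⟪u, w⟫ ≤ lam * ‖w‖ ^ 2 + lam⁻¹ * ‖u‖ ^ 2 := by
  have hsq : 0 ≤ lam⁻¹ * (lam * ‖w‖ - ‖u‖) ^ 2 := by positivity
  have hexp : lam⁻¹ * (lam * ‖w‖ - ‖u‖) ^ 2
      = lam * ‖w‖ ^ 2 + lam⁻¹ * ‖u‖ ^ 2 - 2 * (‖u‖ * ‖w‖) := by
    field_simp; ring
  linarith [real_inner_le_norm u w]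

variable [CompleteSpace E] {U : E → ℝ} {m M : ℝ}

lemma ContDiff.differentiable_gradient (hU : ContDiff ℝ 2 U) : Differentiable ℝ (gradient U) :=
  (InnerProductSpace.toDual ℝ E).symm.toContinuousLinearEquiv.differentiable.comp
    ((hU.fderiv_right (by norm_num)).differentiable one_ne_zero)

lemma hasDerivAt_comp_add_smul (hU : Differentiable ℝ U) (y d : E) (t : ℝ) :
    HasDerivAt (fun τ : ℝ => U (y + τ • d)) ⟪gradient U (y + t • d), d⟫ t :=
  ((hU _).hasFDerivAt.comp_hasDerivAt t (hasDerivAt_add_smul y d t)).congr_deriv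
    inner_gradient_left.symm

lemma hasDerivAt_inner_gradient_comp_add_smul (hU : Differentiable ℝ (gradient U))
    (y d w : E) (t : ℝ) :
    HasDerivAt (fun τ : ℝ => ⟪gradient U (y + τ • d), w⟫)
      ⟪fderiv ℝ (gradient U) (y + t • d) d, w⟫ t := by
  simpa using ((hU _).hasFDerivAt.comp_hasDerivAt t (hasDerivAt_add_smul y d t)).inner ℝ
    (hasDerivAt_const t w)

lemma inner_gradient_sub_mem_Icc (hU : Differentiable ℝ (gradient U))
    (hHess : ∀ x d : E, ⟪fderiv ℝ (gradient U) x d, d⟫ ∈ Icc (m * ‖d‖ ^ 2) (M * ‖d‖ ^ 2))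
    (p q : E) :
    ⟪gradient U q - gradient U p, q - p⟫ ∈ Icc (m * ‖q - p‖ ^ 2) (M * ‖q - p‖ ^ 2) := by
  obtain ⟨c, -, hc⟩ := exists_hasDerivAt_eq_slope _ _ zero_lt_one
    (fun t _ => (hasDerivAt_inner_gradient_comp_add_smul hU p (q - p) (q - p) t).continuousAt
      |>.continuousWithinAt)
    fun t _ => hasDerivAt_inner_gradient_comp_add_smul hU p (q - p) (q - p) t
  rw [one_smul, zero_smul, add_zero, add_sub_cancel, sub_zero, div_one, ← inner_sub_left] at hc
  exact hc ▸ hHess _ _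

lemma le_add_inner_gradient_add_sq (hU : Differentiable ℝ U)
    (hL : ∀ p q : E, ⟪gradient U q - gradient U p, q - p⟫ ≤ M * ‖q - p‖ ^ 2) (y d : E) :
    U (y + d) ≤ U y + ⟪gradient U y, d⟫ + M / 2 * ‖d‖ ^ 2 := by
  have := sub_sub_deriv_le_of_deriv_sub_le (K := M * ‖d‖ ^ 2)
    (hasDerivAt_comp_add_smul hU y d) fun t ht => by
      have h := hL y (y + t • d)
      rw [add_sub_cancel_left, inner_smul_right, norm_smul, Real.norm_of_nonneg ht.1.le] at h
      rw [zero_smul, add_zero, ← inner_sub_left]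
      refine le_of_mul_le_mul_left ?_ ht.1
      linarith
  simp only [one_smul, zero_smul, add_zero] at this
  linarith

lemma add_inner_gradient_le (hU : Differentiable ℝ U)
    (hmono : ∀ p q : E, 0 ≤ ⟪gradient U q - gradient U p, q - p⟫) (y d : E) :
    U y + ⟪gradient U y, d⟫ ≤ U (y + d) := by
  have := sub_sub_deriv_le_of_deriv_sub_le (K := 0)
    (fun t => (hasDerivAt_comp_add_smul hU y d t).neg) fun t ht => by
      have h := hmono y (y + t • d)
      rw [add_sub_cancel_left, inner_smul_right, mul_nonneg_iff_of_pos_left ht.1,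
        inner_sub_left] at h
      rw [zero_smul, add_zero]
      linarith
  simp only [Pi.neg_apply, one_smul, zero_smul, add_zero] at this
  linarith

lemma norm_gradient_sub_sq_le (hU : Differentiable ℝ U)
    (hmono : ∀ p q : E, 0 ≤ ⟪gradient U q - gradient U p, q - p⟫)
    (hL : ∀ p q : E, ⟪gradient U q - gradient U p, q - p⟫ ≤ M * ‖q - p‖ ^ 2) (hM : 0 < M)
    (p q : E) :
    ‖gradient U q - gradient U p‖ ^ 2 ≤ 2 * M * (U q - U p - ⟪gradient U p, q - p⟫) := by
  set g := gradient U q - gradient U p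
  -- Evaluate the convexity bound from `p` and the descent bound from `q` at `q - M⁻¹ • g`.
  have hlower := add_inner_gradient_le hU hmono p (q - p - M⁻¹ • g)
  have hupper := le_add_inner_gradient_add_sq hU hL q (-(M⁻¹ • g))
  rw [show p + (q - p - M⁻¹ • g) = q + -(M⁻¹ • g) by abel, inner_sub_right,
    inner_smul_right] at hlower
  rw [inner_neg_right, inner_smul_right, norm_neg, norm_smul, mul_pow, Real.norm_eq_abs,
    sq_abs] at hupper
  have hg : M⁻¹ * ⟪gradient U q, g⟫ - M⁻¹ * ⟪gradient U p, g⟫ = M⁻¹ * ‖g‖ ^ 2 := by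
    rw [← mul_sub, ← inner_sub_left, real_inner_self_eq_norm_sq]
  have : M / 2 * (M⁻¹ ^ 2 * ‖g‖ ^ 2) = M⁻¹ * ‖g‖ ^ 2 / 2 := by field_simp
  calc ‖g‖ ^ 2 = 2 * M * (M⁻¹ * ‖g‖ ^ 2 / 2) := by field_simp
    _ ≤ 2 * M * (U q - U p - ⟪gradient U p, q - p⟫) := by gcongr; linarith

lemma norm_gradient_sub_sq_le_inner (hU : Differentiable ℝ U)
    (hmono : ∀ p q : E, 0 ≤ ⟪gradient U q - gradient U p, q - p⟫)
    (hL : ∀ p q : E, ⟪gradient U q - gradient U p, q - p⟫ ≤ M * ‖q - p‖ ^ 2) (hM : 0 < M)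
    (p q : E) :
    ‖gradient U q - gradient U p‖ ^ 2 ≤ M * ⟪gradient U q - gradient U p, q - p⟫ := by
  have hpq := norm_gradient_sub_sq_le hU hmono hL hM p q
  have hqp := norm_gradient_sub_sq_le hU hmono hL hM q p
  rw [norm_sub_rev, ← neg_sub q p, inner_neg_right] at hqp
  rw [inner_sub_left]
  linarith

end Gradient

section BBK

variable {n : ℕ} {m M γ h : ℝ}

lemma bbk_velocity_coeff_bound (hm : 0 ≤ m) (hmM : m ≤ M) (hM : 0 < M) (hγ : 0 < γ)
    (hγM : 12 * M ≤ γ ^ 2) (hh : 0 < h) (hγh : γ * h < 1 / 4) :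
    h * γ / M ≤ (1 - m * h / (4 * γ)) * (1 / M - 2 * h / γ)
      - 1 / M * ((1 - γ * h / 2) / (1 + γ * h / 2)) ^ 2 := by
  have hu : 0 < γ * h := mul_pos hγ hh
  have hα : ((1 - γ * h / 2) / (1 + γ * h / 2)) ^ 2 ≤ 1 - 3 / 2 * (γ * h) := by
    rw [div_pow, div_le_iff₀ (by positivity)]
    nlinarith [mul_pos hu (sub_pos.2 hγh), mul_pos (mul_pos hu hu) (sub_pos.2 hγh)]
  have hmargin :
      h * γ / M + m * h / (4 * γ) * (1 / M) + 2 * h / γ ≤ 3 / 2 * (γ * h) * (1 / M) := by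
    rw [← sub_nonneg]
    have : 3 / 2 * (γ * h) * (1 / M) - (h * γ / M + m * h / (4 * γ) * (1 / M) + 2 * h / γ)
        = h / (4 * γ * M) * (2 * γ ^ 2 - m - 8 * M) := by
      field_simp; ring
    rw [this]
    exact mul_nonneg (by positivity) (by linarith)
  have hc : 0 ≤ m * h / (4 * γ) * (2 * h / γ) := by positivity
  linear_combination hmargin + 1 / M * hα + hc

lemma bbk_position_coeff_bound (hm : 0 ≤ m) (hmM : m ≤ M) (hM : 0 < M) (hγ : 0 < γ)
    (hγM : 12 * M ≤ γ ^ 2) (hh : 0 < h) (hγh : γ * h < 1 / 4) :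
    m * h / (4 * γ) + (m * h / (4 * γ) * ((1 - γ * h / 2) / γ)) ^ 2 / (h * γ / M)
      ≤ m * h / (2 * γ) := by
  have hκ : ((1 - γ * h / 2) / γ) ^ 2 ≤ 1 / γ ^ 2 := by
    rw [div_pow]
    gcongr
    nlinarith [mul_pos hγ hh]
  have hcharge : (m * h / (4 * γ) * ((1 - γ * h / 2) / γ)) ^ 2 / (h * γ / M)
      ≤ m * h / (4 * γ) := by
    calc _ ≤ (m * h / (4 * γ)) ^ 2 * (1 / γ ^ 2) / (h * γ / M) := by
          rw [mul_pow]; gcongr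
      _ = m * h / (4 * γ) * (m * M / (4 * γ ^ 4)) := by field_simp
      _ ≤ m * h / (4 * γ) * 1 := by
          gcongr
          rw [div_le_one (by positivity)]
          nlinarith [mul_le_mul_of_nonneg_right hmM hM.le,
            mul_le_mul hγM hγM (by positivity) (by positivity)]
      _ = _ := mul_one _
  linarith [show m * h / (2 * γ) = 2 * (m * h / (4 * γ)) by ring]

lemma bbk_gradient_coeff_bound (hM : 0 < M) (hγ : 0 < γ) (hh : 0 < h) (hγh : γ * h < 1 / 4) :
    (h / (1 + γ * h / 2)) ^ 2
      + 1 / M * ((1 - γ * h / 2) / (1 + γ * h / 2)) ^ 2 * (h / (1 + γ * h / 2)) ^ 2 / (h * γ / M)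
      ≤ 5 / 4 * (h / γ) := by
  have hs : 1 ≤ 1 + γ * h / 2 := by nlinarith [mul_pos hγ hh]
  have hα : ((1 - γ * h / 2) / (1 + γ * h / 2)) ^ 2 ≤ 1 := by
    rw [div_pow, div_le_one (by positivity)]
    nlinarith [mul_pos hγ hh]
  have hβ : (h / (1 + γ * h / 2)) ^ 2 ≤ h ^ 2 := by
    gcongr
    exact div_le_self hh.le hs
  calc _ ≤ h ^ 2 + 1 / M * 1 * h ^ 2 / (h * γ / M) := by gcongr
    _ = h / γ * (γ * h) + h / γ := by field_simp
    _ ≤ h / γ * (1 / 4) + h / γ := by gcongr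
    _ = 5 / 4 * (h / γ) := by ring

lemma bbk_modNormSq_gap_eq (a c : ℝ) (hγ : γ ≠ 0) (hs : 1 + γ * h / 2 ≠ 0)
    (Z W g : EuclideanSpace ℝ (Fin n)) :
    (1 - c) * modNormSq a ((1 + γ * h / 2) / γ) (Z - h • W, W)
      - modNormSq a ((1 + γ * h / 2) / γ)
          (Z, ((1 - γ * h / 2) / (1 + γ * h / 2)) • W - (h / (1 + γ * h / 2)) • g)
      = ((1 - c) * (a - 2 * h / γ) - a * ((1 - γ * h / 2) / (1 + γ * h / 2)) ^ 2) * ‖W‖ ^ 2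
        - 2 * ⟪(c * ((1 - γ * h / 2) / γ)) • Z
            - (a * ((1 - γ * h / 2) / (1 + γ * h / 2)) * (h / (1 + γ * h / 2))) • g, W⟫
        + 2 * (h / γ) * ⟪g, Z⟫ - c * ‖Z‖ ^ 2 - a * (h / (1 + γ * h / 2)) ^ 2 * ‖g‖ ^ 2 := by
  simp only [modNormSq, norm_sub_sq_real, inner_sub_left, inner_sub_right, inner_smul_left,
    inner_smul_right, norm_smul, mul_pow, Real.norm_eq_abs, sq_abs, real_inner_self_eq_norm_sq,
    real_inner_comm Z g, real_inner_comm W g, RCLike.conj_to_real]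
  have hs' : 2 + h * γ ≠ 0 := by contrapose! hs; linear_combination hs / 2
  field_simp
  ring

lemma modNormSq_bbk_increment_le (hm : 0 ≤ m) (hmM : m ≤ M) (hM : 0 < M) (hγ : 0 < γ)
    (hγM : 12 * M ≤ γ ^ 2) (hh : 0 < h) (hγh : γ * h < 1 / 4) {Z W g : EuclideanSpace ℝ (Fin n)}
    (hgZ : m * ‖Z‖ ^ 2 ≤ ⟪g, Z⟫) (hg : ‖g‖ ^ 2 ≤ M * ⟪g, Z⟫) :
    modNormSq (1 / M) ((1 + γ * h / 2) / γ)
        (Z, ((1 - γ * h / 2) / (1 + γ * h / 2)) • W - (h / (1 + γ * h / 2)) • g)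
      ≤ (1 - m * h / (4 * γ)) * modNormSq (1 / M) ((1 + γ * h / 2) / γ) (Z - h • W, W) := by
  have hs : 1 + γ * h / 2 ≠ 0 := by positivity
  have hgap := bbk_modNormSq_gap_eq (1 / M) (m * h / (4 * γ)) hγ.ne' hs Z W g
  have hvel := bbk_velocity_coeff_bound hm hmM hM hγ hγM hh hγh
  have hpos := bbk_position_coeff_bound hm hmM hM hγ hγM hh hγh
  have hgrad := bbk_gradient_coeff_bound hM hγ hh hγh
  set α := (1 - γ * h / 2) / (1 + γ * h / 2)
  set β := h / (1 + γ * h / 2)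
  set κ := (1 - γ * h / 2) / γ
  set c := m * h / (4 * γ)
  set a := 1 / M
  set lam := h * γ / M
  set u := (c * κ) • Z - (a * α * β) • g with hu_def
  have hα : 0 ≤ α := div_nonneg (by nlinarith) (by positivity)
  have hβ : 0 ≤ β := by positivity
  have hκ : 0 ≤ κ := div_nonneg (by nlinarith) hγ.le
  have hc : 0 ≤ c := by positivity
  have ha : 0 < a := by positivity
  have hlam : 0 < lam := by positivity
  have hG : 0 ≤ ⟪g, Z⟫ := le_trans (by positivity) hgZ
  have hg' : a * ‖g‖ ^ 2 ≤ ⟪g, Z⟫ := by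
    rw [one_div_mul_eq_div, div_le_iff₀ hM]; linarith
  have hyoung := two_mul_inner_le_mul_norm_sq_add_inv_mul_norm_sq hlam u W
  have hu : ‖u‖ ^ 2 = (c * κ) ^ 2 * ‖Z‖ ^ 2 - 2 * (c * κ * (a * α * β)) * ⟪g, Z⟫
      + (a * α * β) ^ 2 * ‖g‖ ^ 2 := by
    rw [hu_def, norm_sub_sq_real, norm_smul, norm_smul, inner_smul_left, inner_smul_right,
      real_inner_comm, Real.norm_eq_abs, Real.norm_eq_abs, mul_pow, mul_pow, sq_abs, sq_abs]
    simp only [RCLike.conj_to_real]; ring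
  have hcross : 0 ≤ c * κ * (a * α * β) * ⟪g, Z⟫ := by positivity
  clear_value α β κ c a lam u
  -- Young splits `2 ⟪u, W⟫` into `lam ‖W‖²`, covered by `hvel`, and `‖u‖² / lam`; with the
  -- gap's own `‖Z‖²`, `‖g‖²` terms this costs at most `(h / (2γ) + 5h / (4γ)) ⟪g, Z⟫`.
  linear_combination -hgap + ‖W‖ ^ 2 * hvel + hyoung + lam⁻¹ * hu + 2 * lam⁻¹ * hcross
    + ‖Z‖ ^ 2 * hpos + (a * ‖g‖ ^ 2) * hgrad + h / (2 * γ) * hgZ + 5 / 4 * (h / γ) * hg'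
    + 1 / 4 * (h / γ) * hG

end BBK

theorem bbk_core_one_step_contraction {n : ℕ} (m M γ h : ℝ)
    (U : EuclideanSpace ℝ (Fin n) → ℝ)
    (hm : 0 < m) (hmM : m < M) (hU : ContDiff ℝ 2 U)
    (hHess : ∀ x d : EuclideanSpace ℝ (Fin n),
      m * ‖d‖ ^ 2 ≤ ⟪fderiv ℝ (gradient U) x d, d⟫ ∧
        ⟪fderiv ℝ (gradient U) x d, d⟫ ≤ M * ‖d‖ ^ 2)
    (hγ : γ ≥ Real.sqrt (12 * M)) (hh : 0 < h) (hh2 : h < 1 / (4 * γ)) :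
    ∀ x v x' v' : EuclideanSpace ℝ (Fin n),
      modNormSq (1 / M) ((1 + γ * h / 2) / γ)
          ((x' + h • v',
              ((1 - γ * h / 2) / (1 + γ * h / 2)) • v'
                - (h / (1 + γ * h / 2)) • gradient U (x' + h • v')) -
            (x + h • v,
              ((1 - γ * h / 2) / (1 + γ * h / 2)) • v
                - (h / (1 + γ * h / 2)) • gradient U (x + h • v))) ≤
        (1 - m * h / (4 * γ)) *
          modNormSq (1 / M) ((1 + γ * h / 2) / γ) (x' - x, v' - v) := by
  intro x v x' v'
  have hM : 0 < M := hm.trans hmM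
  have hγ0 : 0 < γ := (Real.sqrt_pos.2 (by positivity)).trans_le hγ
  have hγM : 12 * M ≤ γ ^ 2 := (Real.sqrt_le_left hγ0.le).1 hγ
  have hγh : γ * h < 1 / 4 := by
    rw [lt_div_iff₀ (by positivity)] at hh2; linarith
  have hgrad := hU.differentiable_gradient
  have hIcc := inner_gradient_sub_mem_Icc hgrad hHess
  have hcoco := norm_gradient_sub_sq_le_inner (hU.differentiable (by norm_num))
    (fun p q => (mul_nonneg hm.le (sq_nonneg _)).trans (hIcc p q).1) (fun p q => (hIcc p q).2) hM
    (x + h • v) (x' + h • v')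
  convert modNormSq_bbk_increment_le hm.le hmM.le hM hγ0 hγM hh hγh
    (hIcc (x + h • v) (x' + h • v')).1 hcoco (W := v' - v) using 2
  · rw [Prod.mk_sub_mk]; congr 1; module
  · congr 2; module
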